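/- arXiv:math/9901130 — 7 statements merged into one kernel-verified Lean document; each statement's English description precedes it below -/
import Mathlib

section
/- A projective representation V of G over F is irreducible if and only if End_F(V) has no G-invariant left ideals other than 0 and End_F(V). -/
/-- A projective representation `V` of `G` over `F` is irreducible if and
only if `End_F(V)` (with the conjugation `G`-action) has no `G`-invariant left ideals other
than `0` and the whole algebra. -/
theorem irreducible_iff_no_invariant_left_ideals
    {F : Type*} [Field F] {V : Type*} [AddCommGroup V] [Module F V]
    [FiniteDimensional F V]
    {G : Type*} [Group G]
    (ρ : G → V ≃ₗ[F] V) (α : G → G → Fˣ)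
    (hρ1 : ρ 1 = LinearEquiv.refl F V)
    (hcoc : ∀ x y : G, ∀ v : V, ρ (x * y) v = (α x y : F) • ρ x (ρ y v)) :
    (∀ L : Submodule F V, (∀ g : G, ∀ v ∈ L, ρ g v ∈ L) → L = ⊥ ∨ L = ⊤) ↔
    (∀ I : Ideal (Module.End F V),
      (∀ g : G, ∀ f ∈ I, ((ρ g : V →ₗ[F] V) * f * ((ρ g).symm : V →ₗ[F] V)) ∈ I) →
      I = ⊥ ∨ I = ⊤) := by
  classical
  -- key formula for the inverse of `ρ g`
  have hsymm : ∀ (g : G) (w : V), (ρ g).symm w = (α g⁻¹ g : F) • ρ g⁻¹ w := by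
    intro g w
    have h := hcoc g⁻¹ g ((ρ g).symm w)
    rw [inv_mul_cancel, hρ1] at h
    simpa using h
  constructor
  · -- irreducible ⇒ no nontrivial invariant left ideals
    intro hirr I hI
    -- the common kernel of `I`
    let W : Submodule F V :=
      { carrier := {v | ∀ f ∈ I, f v = 0}
        add_mem' := by
          intro a b ha hb f hf
          simp [map_add, ha f hf, hb f hf]
        zero_mem' := by intro f hf; simp
        smul_mem' := by
          intro c a ha f hf
          simp [map_smul, ha f hf] }
    have hWmem : ∀ v : V, v ∈ W ↔ ∀ f ∈ I, f v = 0 := fun _ => Iff.rfl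
    have hWinv : ∀ g : G, ∀ v ∈ W, ρ g v ∈ W := by
      intro g v hv f hf
      have h1 := hv _ (hI g⁻¹ f hf)
      have h2 : (ρ g⁻¹ : V →ₗ[F] V) (f ((ρ g⁻¹).symm v)) = 0 := h1
      rw [hsymm g⁻¹ v] at h2
      simp only [inv_inv, map_smul] at h2
      have h3 : ρ g⁻¹ (f (ρ g v)) = 0 := by
        have hu : (α g g⁻¹ : F) ≠ 0 := Units.ne_zero _
        have := smul_eq_zero.mp h2
        rcases this with h | h
        · exact absurd h hu
        · exact h
      have := (ρ g⁻¹).map_eq_zero_iff.mp h3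
      exact this
    rcases hirr W hWinv with hW | hW
    · -- common kernel is ⊥ : show I = ⊤
      right
      -- find finitely many elements of I with trivial common kernel
      have hwf : WellFoundedLT (Submodule F V) := inferInstance
      set T : Set (Submodule F V) :=
        {K | ∃ s : Finset (Module.End F V), (↑s : Set (Module.End F V)) ⊆ I ∧
              K = ⨅ f ∈ s, LinearMap.ker f} with hT
      have hTne : T.Nonempty := ⟨⊤, ∅, by simp⟩
      obtain ⟨K₀, hK₀T, hK₀min⟩ := hwf.wf.has_min T hTne
      obtain ⟨s, hsI, hKs⟩ := hK₀T
      have hK₀le : ∀ f ∈ I, K₀ ≤ LinearMap.ker f := by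
        intro f hf
        by_contra hle
        have hlt : K₀ ⊓ LinearMap.ker f < K₀ := by
          rw [inf_lt_left]
          exact hle
        have hmem : K₀ ⊓ LinearMap.ker f ∈ T := by
          refine ⟨insert f s, ?_, ?_⟩
          · intro x hx
            rcases Finset.mem_insert.mp (by exact_mod_cast hx) with h | h
            · rw [h]; exact hf
            · exact hsI (by exact_mod_cast h)
          · rw [Finset.iInf_insert, hKs, inf_comm]
        exact hK₀min _ hmem hlt
      have hK₀bot : K₀ = ⊥ := by
        rw [← hW]
        apply le_antisymm
        · intro v hv
          rw [hWmem]
          intro f hf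
          exact hK₀le f hf hv
        · rw [hW]; exact bot_le
      -- the map into the product
      let Φ : V →ₗ[F] (s → V) := LinearMap.pi (fun f => (f : Module.End F V))
      have hkerΦ : LinearMap.ker Φ = ⊥ := by
        rw [LinearMap.ker_pi, ← hK₀bot, hKs]
        rw [iInf_subtype]
      obtain ⟨Ψ, hΨ⟩ := LinearMap.exists_leftInverse_of_injective Φ hkerΦ
      -- build `1` as a sum of elements of I
      have hone : (1 : Module.End F V) =
          ∑ f ∈ s.attach, (Ψ ∘ₗ LinearMap.single F (fun _ : s => V) f) ∘ₗ (f : Module.End F V) := by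
        apply LinearMap.ext
        intro v
        have hid' : Ψ (Φ v) = v := by simpa using LinearMap.congr_fun hΨ v
        have hΦ : (∑ f ∈ s.attach, LinearMap.single F (fun _ : s => V) f ((f : Module.End F V) v))
            = Φ v := by
          funext i
          simp only [Finset.sum_apply, LinearMap.single_apply, Pi.single_apply]
          rw [Finset.sum_ite_eq (s.attach) i (fun f => (f : Module.End F V) v)]
          simp [Φ]
        simp only [LinearMap.sum_apply, LinearMap.comp_apply, Module.End.one_apply]
        rw [← map_sum, hΦ, hid']
      rw [Ideal.eq_top_iff_one, hone]
      apply Ideal.sum_mem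
      intro f _
      have hfI : (f : Module.End F V) ∈ I := hsI f.2
      exact I.mul_mem_left _ hfI
    · -- common kernel is ⊤ : I = ⊥
      left
      rw [eq_bot_iff]
      intro f hf
      rw [Submodule.mem_bot]
      apply LinearMap.ext
      intro v
      have : v ∈ W := hW ▸ Submodule.mem_top
      simpa using this f hf
  · -- no nontrivial invariant ideals ⇒ irreducible
    intro hid L hL
    -- the annihilator ideal of L
    let I : Ideal (Module.End F V) :=
      { carrier := {f | ∀ v ∈ L, f v = 0}
        add_mem' := by
          intro a b ha hb v hv
          simp [ha v hv, hb v hv]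
        zero_mem' := by intro v hv; simp
        smul_mem' := by
          intro c a ha v hv
          show c (a v) = 0
          rw [ha v hv, map_zero] }
    have hIinv : ∀ g : G, ∀ f ∈ I, ((ρ g : V →ₗ[F] V) * f * ((ρ g).symm : V →ₗ[F] V)) ∈ I := by
      intro g f hf v hv
      show ρ g (f ((ρ g).symm v)) = 0
      have hmem : (ρ g).symm v ∈ L := by
        rw [hsymm g v]
        exact L.smul_mem _ (hL g⁻¹ v hv)
      rw [hf _ hmem, map_zero]
    rcases hid I hIinv with hIb | hIt
    · -- I = ⊥ ⇒ L = ⊤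
      right
      by_contra hLt
      obtain ⟨v, hv⟩ : ∃ v, v ∉ L := by
        by_contra h
        push_neg at h
        exact hLt (Submodule.eq_top_iff'.mpr h)
      have hv0 : L.mkQ v ≠ 0 := by
        rw [Submodule.mkQ_apply, ne_eq, Submodule.Quotient.mk_eq_zero]
        exact hv
      obtain ⟨φ, hφ⟩ := LinearMap.exists_leftInverse_of_injective
        (LinearMap.toSpanSingleton F (V ⧸ L) (L.mkQ v)) (LinearMap.ker_toSpanSingleton F hv0)
      have hφv : φ (L.mkQ v) = 1 := by
        have := LinearMap.congr_fun hφ 1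
        simpa using this
      set f : Module.End F V := LinearMap.toSpanSingleton F V v ∘ₗ φ ∘ₗ L.mkQ with hfdef
      have hfI : f ∈ I := by
        intro u hu
        have : L.mkQ u = 0 := by
          rw [Submodule.mkQ_apply, Submodule.Quotient.mk_eq_zero]
          exact hu
        simp [hfdef, this]
      rw [hIb] at hfI
      have hf0 : f = 0 := by simpa using hfI
      have : f v = v := by
        rw [hfdef]
        simp only [LinearMap.comp_apply, Submodule.mkQ_apply] at hφv ⊢
        rw [hφv]
        simp [LinearMap.toSpanSingleton_apply]
      rw [hf0] at this
      simp at this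
      exact hv (this ▸ L.zero_mem)
    · -- I = ⊤ ⇒ L = ⊥
      left
      rw [eq_bot_iff]
      intro v hv
      have h1 : (1 : Module.End F V) ∈ I := hIt ▸ Submodule.mem_top
      have := h1 v hv
      simpa using this
end

section
/- If F is an infinite field and V is a completely reducible finite-dimensional representation of G over F, then V is multiplicity-free if and only if End_F(V) has only finitely many G-invariant left ideals. -/
open LinearMap


open LinearMap

section Aux

variable {F : Type*} [Field F] {V : Type*} [AddCommGroup V] [Module F V]

/-- A linear map vanishing on the common kernel of a left ideal belongs to the ideal. -/
theorem mem_ideal_of_vanish [FiniteDimensional F V] (I : Ideal (Module.End F V))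
    (f : Module.End F V) (hf : ∀ v : V, (∀ h ∈ I, h v = 0) → f v = 0) : f ∈ I := by
  classical
  let c : Set (Submodule F V) :=
    {N | ∃ t : Finset (Module.End F V), ↑t ⊆ (I : Set (Module.End F V)) ∧
      N = t.inf LinearMap.ker}
  have hcne : c.Nonempty := ⟨⊤, ∅, by simp, by simp⟩
  obtain ⟨N, ⟨t, htI, hNt⟩, hNmin⟩ := (wellFounded_lt (α := Submodule F V)).has_min c hcne
  have hle : ∀ h ∈ I, N ≤ LinearMap.ker h := by
    intro h hh
    by_contra hcon
    refine hNmin (N ⊓ LinearMap.ker h)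
      ⟨insert h t, ?_, by rw [Finset.inf_insert, hNt, inf_comm]⟩
      (inf_le_left.lt_of_ne fun e => hcon (by rw [← e]; exact inf_le_right))
    intro x hx
    rcases Finset.mem_insert.mp hx with rfl | hx
    · exact hh
    · exact htI hx
  have hNf : N ≤ LinearMap.ker f := by
    intro v hv
    exact LinearMap.mem_ker.mpr (hf v fun h hh => hle h hh hv)
  -- factor `f` through the product of the elements of `t`
  let h : V →ₗ[F] (↥t → V) := LinearMap.pi fun i : ↥t => (i : Module.End F V)
  have hker : LinearMap.ker h = N := by
    rw [LinearMap.ker_pi, hNt, Finset.inf_eq_iInf, iInf_subtype]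
  have hkerf : LinearMap.ker h ≤ LinearMap.ker f := hker ▸ hNf
  let Φ : (V ⧸ LinearMap.ker h) →ₗ[F] V := (LinearMap.ker h).liftQ f hkerf
  let e : (V ⧸ LinearMap.ker h) ≃ₗ[F] LinearMap.range h := h.quotKerEquivRange
  let g₀ : ↥(LinearMap.range h) →ₗ[F] V := Φ ∘ₗ (e.symm : ↥(LinearMap.range h) →ₗ[F] _)
  obtain ⟨g, hg⟩ := g₀.exists_extend
  have key : ∀ v : V, g (h v) = f v := by
    intro v
    have h1 : g (h v) = g₀ ⟨h v, LinearMap.mem_range_self h v⟩ :=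
      LinearMap.congr_fun hg ⟨h v, LinearMap.mem_range_self h v⟩
    rw [h1]
    have h2 : e.symm ⟨h v, LinearMap.mem_range_self h v⟩ = Submodule.Quotient.mk v := by
      apply e.injective
      rw [LinearEquiv.apply_symm_apply]
      exact Subtype.ext (h.quotKerEquivRange_apply_mk v).symm
    show Φ (e.symm ⟨h v, LinearMap.mem_range_self h v⟩) = f v
    rw [h2]
    exact Submodule.liftQ_apply _ f v
  have hsum : f = ∑ i : ↥t,
      (g ∘ₗ LinearMap.single F (fun _ : ↥t => V) i) * (i : Module.End F V) := by
    ext v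
    rw [← key v]
    have hv : h v = ∑ i : ↥t, Pi.single i ((i : Module.End F V) v) :=
      (Finset.univ_sum_single (h v)).symm
    rw [hv, map_sum, LinearMap.sum_apply]
    rfl
  rw [hsum]
  exact Submodule.sum_mem I fun i _ => I.mul_mem_left _ (htI i.2)

end Aux


section Aux2

variable {F : Type*} [Field F] {V : Type*} [AddCommGroup V] [Module F V]

theorem exists_ker_eq (W : Submodule F V) : ∃ f : Module.End F V, LinearMap.ker f = W := by
  obtain ⟨W', hW'⟩ := Submodule.exists_isCompl W
  refine ⟨W'.subtype ∘ₗ Submodule.projectionOnto W' W hW'.symm, ?_⟩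
  rw [LinearMap.ker_comp, Submodule.ker_subtype, Submodule.comap_bot,
    Submodule.linearProjOfIsCompl_ker]

variable {G : Type*} [Group G] (ρ : Representation F G V)

theorem rep_mul_asAlgebraHom_mem (I : Ideal (Module.End F V))
    (hI : ∀ g : G, ∀ f ∈ I, ρ g * f * ρ g⁻¹ ∈ I) {f : Module.End F V} (hf : f ∈ I)
    (r : MonoidAlgebra F G) : f * ρ.asAlgebraHom r ∈ I := by
  induction r using MonoidAlgebra.induction_on with
  | of g =>
    rw [Representation.asAlgebraHom_of]
    have h1 := hI g⁻¹ f hf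
    rw [inv_inv] at h1
    have h2 := I.mul_mem_left (ρ g) h1
    have e1 : (ρ g : Module.End F V) * (ρ g⁻¹ * f * ρ g) = f * ρ g := by
      have hgg : (ρ g : Module.End F V) * ρ g⁻¹ = 1 := by
        rw [← map_mul, mul_inv_cancel, map_one]
      rw [show (ρ g⁻¹ : Module.End F V) * f * ρ g = ρ g⁻¹ * (f * ρ g) from mul_assoc _ _ _,
        ← mul_assoc, hgg, one_mul]
    rwa [e1] at h2
  | add x y hx hy =>
    rw [map_add, mul_add]
    exact I.add_mem hx hy
  | smul c x hx =>
    rw [map_smul, mul_smul_comm]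
    have e1 : c • (f * ρ.asAlgebraHom x) =
        (c • (1 : Module.End F V)) * (f * ρ.asAlgebraHom x) := by
      rw [smul_mul_assoc, one_mul]
    rw [e1]
    exact I.mul_mem_left _ hx

/-- The `MonoidAlgebra`-submodule associated to an invariant left ideal. -/
def subOfIdeal (I : Ideal (Module.End F V))
    (hI : ∀ g : G, ∀ f ∈ I, ρ g * f * ρ g⁻¹ ∈ I) :
    Submodule (MonoidAlgebra F G) ρ.asModule where
  carrier := {v | ∀ f ∈ I, f (ρ.asModuleEquiv v) = 0}
  add_mem' := by
    intro a b ha hb f hf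
    rw [map_add, map_add, ha f hf, hb f hf, add_zero]
  zero_mem' := by
    intro f hf
    rw [map_zero, map_zero]
  smul_mem' := by
    intro r v hv f hf
    show f (ρ.asModuleEquiv (r • v)) = 0
    rw [ρ.asModuleEquiv_map_smul]
    have key := rep_mul_asAlgebraHom_mem ρ I hI hf r
    have := hv _ key
    rwa [Module.End.mul_apply] at this

/-- The invariant left ideal associated to a `MonoidAlgebra`-submodule. -/
def idealOfSub (N : Submodule (MonoidAlgebra F G) ρ.asModule) : Ideal (Module.End F V) where
  carrier := {f | ∀ v ∈ N, f (ρ.asModuleEquiv v) = 0}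
  add_mem' := by
    intro a b ha hb v hv
    rw [LinearMap.add_apply, ha v hv, hb v hv, add_zero]
  zero_mem' := by
    intro v hv
    rfl
  smul_mem' := by
    intro a f hf v hv
    show (a * f) (ρ.asModuleEquiv v) = 0
    rw [Module.End.mul_apply, hf v hv, map_zero]

theorem idealOfSub_invariant (N : Submodule (MonoidAlgebra F G) ρ.asModule) :
    ∀ g : G, ∀ f ∈ idealOfSub ρ N, ρ g * f * ρ g⁻¹ ∈ idealOfSub ρ N := by
  intro g f hf v hv
  have h1 : (ρ g⁻¹ : Module.End F V) (ρ.asModuleEquiv v) =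
      ρ.asModuleEquiv ((MonoidAlgebra.of F G g⁻¹) • v) := by
    rw [ρ.asModuleEquiv_map_smul, Representation.asAlgebraHom_of]
  show ((ρ g * f * ρ g⁻¹ : Module.End F V)) (ρ.asModuleEquiv v) = 0
  rw [Module.End.mul_apply, Module.End.mul_apply, h1, hf _ (N.smul_mem _ hv), map_zero]

/-- Membership in a submodule is detected by its associated ideal. -/
theorem mem_iff_idealOfSub (N : Submodule (MonoidAlgebra F G) ρ.asModule) (v : ρ.asModule) :
    v ∈ N ↔ ∀ f ∈ idealOfSub ρ N, f (ρ.asModuleEquiv v) = 0 := by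
  constructor
  · intro hv f hf
    exact hf v hv
  · intro hv
    -- the carrier of `N` as an `F`-subspace of `V`
    let W : Submodule F V :=
      { carrier := {x : V | ρ.asModuleEquiv.symm x ∈ N}
        add_mem' := fun {a b} ha hb => by
          show ρ.asModuleEquiv.symm (a + b) ∈ N
          rw [map_add]
          exact N.add_mem ha hb
        zero_mem' := by
          show ρ.asModuleEquiv.symm 0 ∈ N
          rw [map_zero]
          exact N.zero_mem
        smul_mem' := fun c x hx => by
          show ρ.asModuleEquiv.symm (c • x) ∈ N
          rw [ρ.asModuleEquiv_symm_map_smul]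
          exact N.smul_mem _ hx }
    obtain ⟨π, hπ⟩ := exists_ker_eq W
    have hπI : π ∈ idealOfSub ρ N := by
      intro w hw
      have : ρ.asModuleEquiv w ∈ W := by
        show ρ.asModuleEquiv.symm (ρ.asModuleEquiv w) ∈ N
        rwa [LinearEquiv.symm_apply_apply]
      rw [← hπ] at this
      exact this
    have := hv π hπI
    rw [← LinearMap.mem_ker, hπ] at this
    have h2 : ρ.asModuleEquiv.symm (ρ.asModuleEquiv v) ∈ N := this
    rwa [LinearEquiv.symm_apply_apply] at h2

/-- Membership in an invariant ideal is detected by its associated submodule. -/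
theorem mem_iff_subOfIdeal [FiniteDimensional F V] (I : Ideal (Module.End F V))
    (hI : ∀ g : G, ∀ f ∈ I, ρ g * f * ρ g⁻¹ ∈ I) (f : Module.End F V) :
    f ∈ I ↔ ∀ v ∈ subOfIdeal ρ I hI, f (ρ.asModuleEquiv v) = 0 := by
  constructor
  · intro hf v hv
    exact hv f hf
  · intro hf
    apply mem_ideal_of_vanish I f
    intro x hx
    have := hf (ρ.asModuleEquiv.symm x) (by
      intro h hh
      rw [LinearEquiv.apply_symm_apply]
      exact hx h hh)
    rwa [LinearEquiv.apply_symm_apply] at this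

theorem finite_asModule' [FiniteDimensional F V] :
    Module.Finite (MonoidAlgebra F G) ρ.asModule := by
  classical
  obtain ⟨s, hs⟩ := Module.finite_def.mp ‹Module.Finite F V›
  constructor
  let s' : Finset ρ.asModule := s.image (fun x => ρ.asModuleEquiv.symm x)
  refine ⟨s', ?_⟩
  rw [eq_top_iff]
  intro v _
  set P : Submodule (MonoidAlgebra F G) ρ.asModule :=
    Submodule.span (MonoidAlgebra F G) (↑s' : Set ρ.asModule) with hP
  let W : Submodule F V :=
    { carrier := {x : V | ρ.asModuleEquiv.symm x ∈ P}
      add_mem' := fun {a b} ha hb => by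
        show ρ.asModuleEquiv.symm (a + b) ∈ P
        rw [map_add]
        exact Submodule.add_mem _ ha hb
      zero_mem' := by
        show ρ.asModuleEquiv.symm 0 ∈ P
        rw [map_zero]
        exact Submodule.zero_mem _
      smul_mem' := fun c x hx => by
        show ρ.asModuleEquiv.symm (c • x) ∈ P
        rw [ρ.asModuleEquiv_symm_map_smul]
        exact Submodule.smul_mem _ _ hx }
  have hsW : (↑s : Set V) ⊆ W := by
    intro x hx
    show ρ.asModuleEquiv.symm x ∈ P
    apply Submodule.subset_span
    exact Finset.mem_coe.mpr (Finset.mem_image_of_mem _ hx)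
  have htop : (⊤ : Submodule F V) ≤ W := by
    rw [← hs]
    exact Submodule.span_le.mpr hsW
  have := htop (Submodule.mem_top (x := ρ.asModuleEquiv v))
  have h2 : ρ.asModuleEquiv.symm (ρ.asModuleEquiv v) ∈ P := this
  rw [LinearEquiv.symm_apply_apply] at h2
  exact h2

end Aux2

section Main

variable {F : Type*} [Field F] {V : Type*} [AddCommGroup V] [Module F V]
  {G : Type*} [Group G] (ρ : Representation F G V)

theorem finite_submodules_of_multFree [FiniteDimensional F V]
    (hss : IsSemisimpleModule (MonoidAlgebra F G) ρ.asModule)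
    (H : ∀ L₁ L₂ : Submodule (MonoidAlgebra F G) ρ.asModule,
      IsSimpleModule (MonoidAlgebra F G) L₁ → IsSimpleModule (MonoidAlgebra F G) L₂ →
      Nonempty (L₁ ≃ₗ[MonoidAlgebra F G] L₂) → L₁ = L₂) :
    Finite (Submodule (MonoidAlgebra F G) ρ.asModule) := by
  classical
  haveI := hss
  haveI := finite_asModule' ρ
  obtain ⟨s, hsfin, hsInd, hsTop, hsSimple⟩ :=
    ((IsSemisimpleModule.finite_tfae (R := MonoidAlgebra F G) (M := ρ.asModule)).out 0 4).mp
      ‹Module.Finite (MonoidAlgebra F G) ρ.asModule›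
  set R := MonoidAlgebra F G
  set M := ρ.asModule
  have hAtoms : ∀ L : Submodule R M, IsSimpleModule R L → L ∈ s := by
    intro L hL
    set A : ↥s → Submodule R M := fun i => (i : Submodule R M) with hA
    have hInt : DirectSum.IsInternal A :=
      DirectSum.isInternal_submodule_of_iSupIndep_of_iSup_eq_top
        ((sSupIndep_iff s).mp hsInd) (by rw [← sSup_eq_iSup']; exact hsTop)
    let e := LinearEquiv.ofBijective (DirectSum.coeLinearMap A) hInt
    haveI := hL.nontrivial
    obtain ⟨x, hx⟩ := exists_ne (0 : ↥L)
    have hxM : (x : M) ≠ 0 := fun h => hx (Subtype.ext h)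
    have hsymm : e.symm (x : M) ≠ 0 := fun h =>
      hxM (by rw [← e.apply_symm_apply (x : M), h, map_zero])
    obtain ⟨i, hi⟩ : ∃ i, e.symm (x : M) i ≠ 0 := by
      by_contra hcon
      push_neg at hcon
      exact hsymm (DFinsupp.ext hcon)
    let φL : ↥L →ₗ[R] ↥(A i) :=
      (DirectSum.component R ↥s (fun j => ↥(A j)) i) ∘ₗ (e.symm : M →ₗ[R] _) ∘ₗ L.subtype
    have hφval : ∀ z : ↥L, φL z = e.symm (z : M) i := fun z => rfl
    have hφL : φL ≠ 0 := by
      intro h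
      apply hi
      have := LinearMap.congr_fun h x
      rwa [hφval x] at this
    haveI : IsSimpleModule R ↥(A i) := hsSimple i i.2
    have hbij : Function.Bijective φL := (bijective_or_eq_zero φL).resolve_right hφL
    have := H L (A i) hL (hsSimple i i.2) ⟨LinearEquiv.ofBijective φL hbij⟩
    rw [this]
    exact i.2
  have hinj : Function.Injective
      (fun N : Submodule R M => {m : Submodule R M | IsSimpleModule R m ∧ m ≤ N}) := by
    intro N₁ N₂ hN
    simp only at hN
    rw [← IsSemisimpleModule.sSup_simples_le N₁, ← IsSemisimpleModule.sSup_simples_le N₂, hN]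
  haveI : Finite ↥{T : Set (Submodule R M) | T ⊆ s} := hsfin.finite_subsets.to_subtype
  exact Finite.of_injective
    (fun N : Submodule R M =>
      (⟨{m : Submodule R M | IsSimpleModule R m ∧ m ≤ N}, fun m hm => hAtoms m hm.1⟩ :
        {T : Set (Submodule R M) | T ⊆ s}))
    (fun a b h => hinj (congrArg Subtype.val h))

end Main

/-- Let `F` be an infinite field and `V` a finite-dimensional completely
reducible representation of a group `G` over `F`.  Then `V` is multiplicity-free (any two
isomorphic simple subrepresentations coincide) if and only if `End_F(V)` has only finitely
many `G`-invariant left ideals (for the conjugation action of `G`). -/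
theorem multiplicity_free_iff_finitely_many_invariant_left_ideals
    {F : Type*} [Field F] [Infinite F]
    {V : Type*} [AddCommGroup V] [Module F V] [FiniteDimensional F V]
    {G : Type*} [Group G]
    (ρ : Representation F G V)
    (hss : IsSemisimpleModule (MonoidAlgebra F G) ρ.asModule) :
    (∀ L₁ L₂ : Submodule (MonoidAlgebra F G) ρ.asModule,
      IsSimpleModule (MonoidAlgebra F G) L₁ → IsSimpleModule (MonoidAlgebra F G) L₂ →
      Nonempty (L₁ ≃ₗ[MonoidAlgebra F G] L₂) → L₁ = L₂) ↔
    {I : Ideal (Module.End F V) |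
      ∀ g : G, ∀ f ∈ I, ρ g * f * ρ g⁻¹ ∈ I}.Finite := by
  constructor
  · -- multiplicity-free implies finitely many invariant left ideals
    intro H
    haveI := finite_submodules_of_multFree ρ hss H
    rw [← Set.finite_coe_iff]
    refine Finite.of_injective
      (fun I : {I : Ideal (Module.End F V) | ∀ g : G, ∀ f ∈ I, ρ g * f * ρ g⁻¹ ∈ I} =>
        subOfIdeal ρ I.1 I.2) ?_
    intro I₁ I₂ h
    simp only at h
    apply Subtype.ext
    ext f
    rw [mem_iff_subOfIdeal ρ I₁.1 I₁.2 f, mem_iff_subOfIdeal ρ I₂.1 I₂.2 f, h]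
  · -- finitely many invariant left ideals implies multiplicity-free
    intro hfin
    haveI := hfin.to_subtype
    haveI : Finite (Submodule (MonoidAlgebra F G) ρ.asModule) := by
      refine Finite.of_injective
        (fun N : Submodule (MonoidAlgebra F G) ρ.asModule =>
          (⟨idealOfSub ρ N, idealOfSub_invariant ρ N⟩ :
            {I : Ideal (Module.End F V) | ∀ g : G, ∀ f ∈ I, ρ g * f * ρ g⁻¹ ∈ I})) ?_
      intro N₁ N₂ h
      have h' : idealOfSub ρ N₁ = idealOfSub ρ N₂ := congrArg Subtype.val h
      ext v
      rw [mem_iff_idealOfSub ρ N₁ v, mem_iff_idealOfSub ρ N₂ v, h']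
    intro L₁ L₂ h₁ h₂ hiso
    obtain ⟨φ⟩ := hiso
    by_contra hne
    -- the two simple submodules intersect trivially
    have a1 := isSimpleModule_iff_isAtom.mp h₁
    have a2 := isSimpleModule_iff_isAtom.mp h₂
    have hbot : L₁ ⊓ L₂ = ⊥ := by
      rcases a1.le_iff.mp (inf_le_left : L₁ ⊓ L₂ ≤ L₁) with hb | he
      · exact hb
      · have hle : L₁ ≤ L₂ := he ▸ inf_le_right
        rcases a2.le_iff.mp hle with hb | he2
        · exact absurd hb a1.1
        · exact absurd he2 hne
    -- a family of submodules indexed by `F`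
    let σ : F → (ρ.asModule →ₗ[MonoidAlgebra F G] ρ.asModule) := fun c =>
      { toFun := fun x => algebraMap F (MonoidAlgebra F G) c • x
        map_add' := fun x y => smul_add _ x y
        map_smul' := fun r x => by
          simp only [RingHom.id_apply]
          rw [smul_smul, smul_smul, Algebra.commutes] }
    let ψ : F → (↥L₁ →ₗ[MonoidAlgebra F G] ρ.asModule) := fun c =>
      L₁.subtype + (σ c) ∘ₗ (L₂.subtype ∘ₗ (φ : ↥L₁ →ₗ[MonoidAlgebra F G] ↥L₂))
    have hψ : ∀ c (z : ↥L₁),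
        ψ c z = (z : ρ.asModule) + algebraMap F (MonoidAlgebra F G) c • ((φ z : ρ.asModule)) :=
      fun c z => rfl
    have hinj : Function.Injective (fun c => LinearMap.range (ψ c)) := by
      intro c d h
      by_contra hcd
      haveI := h₁.nontrivial
      obtain ⟨x, hx⟩ := exists_ne (0 : ↥L₁)
      have hmem : ψ c x ∈ LinearMap.range (ψ d) := by
        simp only at h
        rw [← h]
        exact LinearMap.mem_range_self _ x
      obtain ⟨y, hy⟩ := hmem
      rw [hψ c x, hψ d y] at hy
      have hkey : ((x : ρ.asModule) - (y : ρ.asModule)) =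
          algebraMap F (MonoidAlgebra F G) d • ((φ y : ρ.asModule)) -
            algebraMap F (MonoidAlgebra F G) c • ((φ x : ρ.asModule)) := by
        rw [sub_eq_sub_iff_add_eq_add, ← hy, add_comm]
      have hm1 : ((x : ρ.asModule) - (y : ρ.asModule)) ∈ L₁ := L₁.sub_mem x.2 y.2
      have hm2 : ((x : ρ.asModule) - (y : ρ.asModule)) ∈ L₂ := by
        rw [hkey]
        exact L₂.sub_mem (L₂.smul_mem _ (φ y).2) (L₂.smul_mem _ (φ x).2)
      have h0 : (x : ρ.asModule) - (y : ρ.asModule) = 0 := by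
        have := hbot ▸ (Submodule.mem_inf.mpr ⟨hm1, hm2⟩)
        simpa using this
      have hxy : x = y := Subtype.ext (sub_eq_zero.mp h0)
      rw [← hxy] at hkey
      have h4 : (algebraMap F (MonoidAlgebra F G) (d - c)) • ((φ x : ρ.asModule)) = 0 := by
        rw [map_sub, sub_smul, ← hkey, sub_self]
      have hu : IsUnit (algebraMap F (MonoidAlgebra F G) (d - c)) :=
        (isUnit_iff_ne_zero.mpr (sub_ne_zero.mpr (Ne.symm hcd))).map
          (algebraMap F (MonoidAlgebra F G))
      obtain ⟨u, hu'⟩ := hu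
      have hφx : ((φ x : ρ.asModule)) = 0 := by
        rw [← hu'] at h4
        calc ((φ x : ρ.asModule)) = ((↑u⁻¹ * ↑u : MonoidAlgebra F G)) • ((φ x : ρ.asModule)) := by
              rw [Units.inv_mul, one_smul]
          _ = (↑u⁻¹ : MonoidAlgebra F G) • ((↑u : MonoidAlgebra F G) • ((φ x : ρ.asModule))) :=
              mul_smul _ _ _
          _ = 0 := by rw [h4, smul_zero]
      have : φ x = 0 := Subtype.ext hφx
      exact hx (by simpa using φ.map_eq_zero_iff.mp this)
    haveI hF : Finite F := Finite.of_injective _ hinj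
    exact not_finite F
end

section
/- Let B be a G-invariant unital subalgebra of the G-simple algebra A = End_D(V), with central primitive idempotents e_1,...,e_l. Then the permutation action of G on {e_1,...,e_l} (given by g·e_i being again a central primitive idempotent of B) is transitive. -/
set_option synthInstance.maxHeartbeats 1000000
set_option maxHeartbeats 1000000

/-- `e` is a central primitive idempotent of the subalgebra `B` of `A`:
a nonzero idempotent commuting with every element of `B` which cannot be decomposed as a
sum of two nonzero orthogonal central idempotents of `B`. -/
def IsCentralPrimitiveIdempotentIn {F A : Type*} [CommSemiring F] [Semiring A] [Algebra F A]
    (B : Subalgebra F A) (e : A) : Prop :=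
  e ∈ B ∧ e ≠ 0 ∧ e * e = e ∧ (∀ b ∈ B, e * b = b * e) ∧
  (∀ f₁ f₂ : A, f₁ ∈ B → f₂ ∈ B → f₁ * f₁ = f₁ → f₂ * f₂ = f₂ →
    (∀ b ∈ B, f₁ * b = b * f₁) → (∀ b ∈ B, f₂ * b = b * f₂) →
    f₁ * f₂ = 0 → e = f₁ + f₂ → f₁ = 0 ∨ f₂ = 0)

private lemma cpi_mul_eq {F A : Type*} [CommRing F] [Ring A] [Algebra F A]
    {B : Subalgebra F A} {e f : A}
    (he : IsCentralPrimitiveIdempotentIn B e) (hf : IsCentralPrimitiveIdempotentIn B f)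
    (hne : e * f ≠ 0) : e = f := by
  obtain ⟨heB, he0, hee, hec, hep⟩ := he
  obtain ⟨hfB, hf0, hff, hfc, hfp⟩ := hf
  have hcomm : e * f = f * e := (hfc e heB).symm
  have key1 : e * (e * f) = e * f := by rw [← mul_assoc, hee]
  have key2 : (e * f) * e = e * f := by rw [mul_assoc, ← hcomm, key1]
  have key3 : f * (e * f) = e * f := by rw [← mul_assoc, ← hcomm, mul_assoc, hff]
  have key4 : (e * f) * f = e * f := by rw [mul_assoc, hff]
  have hidem : (e * f) * (e * f) = e * f := by rw [mul_assoc, key3, key1]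
  have hcommB : ∀ b ∈ B, (e * f) * b = b * (e * f) := by
    intro b hb
    rw [mul_assoc, hfc b hb, ← mul_assoc, hec b hb, mul_assoc]
  -- step 1 : e = e * f
  have step1 : e = e * f := by
    rcases hep (e * f) (e - e * f) (mul_mem heB hfB) (B.sub_mem heB (mul_mem heB hfB))
      hidem
      (by have h : (e - e*f) * (e - e*f) = e*e - e*(e*f) - ((e*f)*e - (e*f)*(e*f)) := by
            noncomm_ring
          rw [h, hee, key1, key2, hidem, sub_self, sub_zero])
      hcommB
      (by intro b hb
          rw [sub_mul, mul_sub, hec b hb, hcommB b hb])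
      (by rw [mul_sub, key2, hidem, sub_self])
      (by rw [add_sub_cancel]) with h | h
    · exact absurd h hne
    · rw [sub_eq_zero] at h; exact h
  -- step 2 : f = e * f
  have step2 : f = e * f := by
    rcases hfp (e * f) (f - e * f) (mul_mem heB hfB) (B.sub_mem hfB (mul_mem heB hfB))
      hidem
      (by have h : (f - e*f) * (f - e*f) = f*f - f*(e*f) - ((e*f)*f - (e*f)*(e*f)) := by
            noncomm_ring
          rw [h, hff, key3, key4, hidem, sub_self, sub_zero])
      hcommB
      (by intro b hb
          rw [sub_mul, mul_sub, hfc b hb, hcommB b hb])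
      (by rw [mul_sub, key4, hidem, sub_self])
      (by rw [add_sub_cancel]) with h | h
    · exact absurd h hne
    · rw [sub_eq_zero] at h; exact h
  rw [step1, ← step2]

private lemma cpi_conj {F A : Type*} [CommRing F] [Ring A] [Algebra F A]
    {B : Subalgebra F A} {u w e : A} (huw : u * w = 1) (hwu : w * u = 1)
    (hB : ∀ f ∈ B, u * f * w ∈ B) (hB' : ∀ f ∈ B, w * f * u ∈ B)
    (he : IsCentralPrimitiveIdempotentIn B e) :
    IsCentralPrimitiveIdempotentIn B (u * e * w) := by
  obtain ⟨heB, he0, hee, hec, hep⟩ := he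
  have hrec : ∀ x : A, w * (u * x * w) * u = x := by
    intro x
    have h : w * (u * x * w) * u = (w * u) * x * (w * u) := by noncomm_ring
    rw [h, hwu, one_mul, mul_one]
  have hrec' : ∀ x : A, u * (w * x * u) * w = x := by
    intro x
    have h : u * (w * x * u) * w = (u * w) * x * (u * w) := by noncomm_ring
    rw [h, huw, one_mul, mul_one]
  have mulconj : ∀ x y : A, (u * x * w) * (u * y * w) = u * (x * y) * w := by
    intro x y
    have h : (u * x * w) * (u * y * w) = u * (x * ((w * u) * y)) * w := by noncomm_ring
    rw [h, hwu, one_mul]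
  have mulconj' : ∀ x y : A, (w * x * u) * (w * y * u) = w * (x * y) * u := by
    intro x y
    have h : (w * x * u) * (w * y * u) = w * (x * ((u * w) * y)) * u := by noncomm_ring
    rw [h, huw, one_mul]
  refine ⟨hB e heB, ?_, ?_, ?_, ?_⟩
  · intro h0
    apply he0
    have := hrec e
    rw [h0, mul_zero, zero_mul] at this
    exact this.symm
  · rw [mulconj, hee]
  · intro b hb
    have hb' := hB' b hb
    conv_lhs => rw [← hrec' b]
    conv_rhs => rw [← hrec' b]
    rw [mulconj, mulconj, hec _ hb']
  · intro f₁ f₂ h1B h2B h1i h2i h1c h2c h12 hsum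
    have hg1 : w * f₁ * u ∈ B := hB' f₁ h1B
    have hg2 : w * f₂ * u ∈ B := hB' f₂ h2B
    have hcm : ∀ x : A, (∀ b ∈ B, x * b = b * x) → (∀ b ∈ B, (w * x * u) * b = b * (w * x * u)) := by
      intro x hx b hb
      have hb'' := hB b hb
      conv_lhs => rw [← hrec b]
      conv_rhs => rw [← hrec b]
      rw [mulconj', mulconj', hx _ hb'']
    have hesum : e = (w * f₁ * u) + (w * f₂ * u) := by
      have h := hrec e
      rw [hsum, mul_add, add_mul] at h
      exact h.symm
    rcases hep (w * f₁ * u) (w * f₂ * u) hg1 hg2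
      (by rw [mulconj', h1i]) (by rw [mulconj', h2i])
      (hcm f₁ h1c) (hcm f₂ h2c)
      (by rw [mulconj', h12, mul_zero, zero_mul]) hesum with h | h
    · left
      have := hrec' f₁
      rw [h, mul_zero, zero_mul] at this
      exact this.symm
    · right
      have := hrec' f₂
      rw [h, mul_zero, zero_mul] at this
      exact this.symm

/-- Let `B` be a `G`-invariant unital subalgebra of the `G`-simple
algebra `A = End_D(V)`.  Then the permutation action of `G` on the central primitive
idempotents of `B` (by conjugation with `ρ(g)`) is transitive. -/
theorem central_primitive_idempotents_transitive
    {F : Type*} [Field F] {D : Type*} [DivisionRing D] [Algebra F D]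
    {V : Type*} [AddCommGroup V] [Module D V] [Module F V]
    [IsScalarTower F D V] [SMulCommClass D F V] [FiniteDimensional F V]
    {G : Type*} [Group G]
    (ρ : G → V ≃ₗ[D] V) (α : G → G → Fˣ)
    (hρ1 : ρ 1 = LinearEquiv.refl D V)
    (hcoc : ∀ x y : G, ∀ v : V, ρ (x * y) v = (α x y : F) • ρ x (ρ y v))
    (hirr : ∀ L : Submodule F V, (∀ g : G, ∀ v ∈ L, ρ g v ∈ L) → L = ⊥ ∨ L = ⊤)
    (B : Subalgebra F (Module.End D V))
    (hB : ∀ g : G, ∀ f ∈ B, ((ρ g : V →ₗ[D] V) * f * ((ρ g).symm : V →ₗ[D] V)) ∈ B) :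
    ∀ e e' : Module.End D V,
      IsCentralPrimitiveIdempotentIn B e → IsCentralPrimitiveIdempotentIn B e' →
      ∃ g : G, (ρ g : V →ₗ[D] V) * e * ((ρ g).symm : V →ₗ[D] V) = e' := by
  intro e e' he he'
  by_contra hcon
  push_neg at hcon
  set u : G → Module.End D V := fun g => (ρ g : V →ₗ[D] V) with hu_def
  set w : G → Module.End D V := fun g => ((ρ g).symm : V →ₗ[D] V) with hw_def
  have hcon' : ∀ g : G, u g * e * w g ≠ e' := hcon
  have huw : ∀ g : G, u g * w g = 1 := by
    intro g; apply LinearMap.ext; intro x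
    simp [hu_def, hw_def, Module.End.mul_apply]
  have hwu : ∀ g : G, w g * u g = 1 := by
    intro g; apply LinearMap.ext; intro x
    simp [hu_def, hw_def, Module.End.mul_apply]
  have hu1 : u 1 = 1 := by
    rw [hu_def]; simp only [hρ1]; rfl
  have hmul : ∀ x y : G, u (x * y) = ((α x y : Fˣ) : F) • (u x * u y) := by
    intro x y; apply LinearMap.ext; intro v
    simp only [hu_def, LinearMap.smul_apply, Module.End.mul_apply, LinearEquiv.coe_coe]
    exact hcoc x y v
  have wg_eq : ∀ g : G, w g = ((α g⁻¹ g : Fˣ) : F) • u g⁻¹ := by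
    intro g
    have h := hmul g⁻¹ g
    rw [inv_mul_cancel, hu1] at h
    calc w g = 1 * w g := (one_mul _).symm
      _ = (((α g⁻¹ g : Fˣ) : F) • (u g⁻¹ * u g)) * w g := by rw [← h]
      _ = ((α g⁻¹ g : Fˣ) : F) • (u g⁻¹ * (u g * w g)) := by
            rw [smul_mul_assoc, mul_assoc]
      _ = ((α g⁻¹ g : Fˣ) : F) • u g⁻¹ := by rw [huw g, mul_one]
  have hB' : ∀ g : G, ∀ f ∈ B, w g * f * u g ∈ B := by
    intro g f hf
    have h2 : w g⁻¹ = ((α g g⁻¹ : Fˣ) : F) • u g := by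
      have h := wg_eq g⁻¹; rwa [inv_inv] at h
    have h3 : u g = (((α g g⁻¹ : Fˣ) : F))⁻¹ • w g⁻¹ := by
      rw [h2, smul_smul, inv_mul_cancel₀ (Units.ne_zero _), one_smul]
    rw [wg_eq g, h3, smul_mul_assoc, smul_mul_assoc, mul_smul_comm]
    exact Subalgebra.smul_mem B (Subalgebra.smul_mem B (hB g⁻¹ f hf) _) _
  have hcpi : ∀ g : G, IsCentralPrimitiveIdempotentIn B (u g * e * w g) := fun g =>
    cpi_conj (huw g) (hwu g) (hB g) (hB' g) he
  have horth : ∀ g : G, e' * (u g * e * w g) = 0 := by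
    intro g
    by_contra h0
    exact hcon' g (cpi_mul_eq he' (hcpi g) h0).symm
  have hkill : ∀ g : G, e' * (u g * e) = 0 := by
    intro g
    have h1 : e' * (u g * e * w g) * u g = e' * (u g * e * (w g * u g)) := by
      noncomm_ring
    rw [hwu g, mul_one] at h1
    rw [← h1, horth g, zero_mul]
  set W : Submodule F V := ⨆ g : G, (LinearMap.range (u g * e)).restrictScalars F with hW_def
  have hWinv : ∀ g : G, ∀ x ∈ W, ρ g x ∈ W := by
    intro h x hx
    have hle : W ≤ Submodule.comap ((u h).restrictScalars F) W := by
      apply iSup_le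
      intro g y hy
      rw [Submodule.restrictScalars_mem, LinearMap.mem_range] at hy
      obtain ⟨z, hz⟩ := hy
      rw [Submodule.mem_comap]
      have hm := congrArg (fun f : Module.End D V => f (e z)) (hmul h g)
      simp only [LinearMap.smul_apply, Module.End.mul_apply] at hm
      have hz2 : ((u h).restrictScalars F) y
          = (((α h g : Fˣ) : F))⁻¹ • (u (h * g) * e) z := by
        rw [LinearMap.restrictScalars_apply, ← hz]
        simp only [Module.End.mul_apply]
        rw [hm, smul_smul, inv_mul_cancel₀ (Units.ne_zero _), one_smul]
      rw [hz2]
      refine Submodule.smul_mem W _ ?_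
      exact le_iSup (fun g : G => (LinearMap.range (u g * e)).restrictScalars F) (h * g)
        (by rw [Submodule.restrictScalars_mem]; exact LinearMap.mem_range_self _ z)
    exact hle hx
  have heV : ∃ y : V, e y ≠ 0 := by
    by_contra hall
    push_neg at hall
    exact he.2.1 (LinearMap.ext fun y => by simpa using hall y)
  obtain ⟨y, hy⟩ := heV
  have hyW : e y ∈ W := by
    refine le_iSup (fun g : G => (LinearMap.range (u g * e)).restrictScalars F) 1 ?_
    rw [Submodule.restrictScalars_mem]
    exact ⟨y, by rw [hu1, one_mul]⟩
  have hWtop : W = ⊤ := by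
    rcases hirr W hWinv with hbot | htop
    · rw [hbot] at hyW
      exact absurd ((Submodule.mem_bot F).mp hyW) hy
    · exact htop
  have hle : W ≤ (LinearMap.ker e').restrictScalars F := by
    apply iSup_le
    intro g x hx
    rw [Submodule.restrictScalars_mem, LinearMap.mem_range] at hx
    obtain ⟨z, hz⟩ := hx
    rw [Submodule.restrictScalars_mem, LinearMap.mem_ker, ← hz]
    have hk := congrArg (fun f : Module.End D V => f z) (hkill g)
    simpa using hk
  rw [hWtop, top_le_iff] at hle
  have he'0 : e' = 0 := by
    apply LinearMap.ext
    intro x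
    have hx : x ∈ (LinearMap.ker e').restrictScalars F := hle ▸ Submodule.mem_top
    simpa using hx
  exact he'.2.1 he'0
end

section
/- Suppose V = Ind_H^G(W) is irreducible, with H of finite index in G. Then for any H-subrepresentation W' of Res_H^G(V) isomorphic to W, V is the internal direct sum of the G-translates ḡ_i W' for a transversal {g_i} of H in G. -/
set_option synthInstance.maxHeartbeats 1000000
set_option maxHeartbeats 1000000

/-- Suppose `V = Ind_H^G(W)` is irreducible, with `H` of finite index in
`G`; internally, `V` is the direct sum of the translates `ρ(gᵢ)W` over a transversal
`T : Fin n → G`.  Then for any `H`-subrepresentation `W'` of `Res_H^G(V)` isomorphic to `W`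
(via an `H`-equivariant isomorphism `e`), `V` is the internal direct sum of the translates
`ρ(gᵢ)W'`. -/
theorem translates_of_isomorphic_copy_direct_sum
    {F : Type*} [Field F] {V : Type*} [AddCommGroup V] [Module F V]
    [FiniteDimensional F V]
    {G : Type*} [Group G] (H : Subgroup G)
    (ρ : G → V ≃ₗ[F] V) (α : G → G → Fˣ)
    (hρ1 : ρ 1 = LinearEquiv.refl F V)
    (hcoc : ∀ x y : G, ∀ v : V, ρ (x * y) v = (α x y : F) • ρ x (ρ y v))
    (hirr : ∀ L : Submodule F V, (∀ g : G, ∀ v ∈ L, ρ g v ∈ L) → L = ⊥ ∨ L = ⊤)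
    {n : ℕ} (T : Fin n → G) (hT : ∀ g : G, ∃! i : Fin n, (T i)⁻¹ * g ∈ H)
    (W : Submodule F V) (hW : ∀ h ∈ H, ∀ v ∈ W, ρ h v ∈ W)
    (hsup : (⨆ i, W.map (ρ (T i) : V →ₗ[F] V)) = ⊤)
    (hindep : iSupIndep fun i => W.map (ρ (T i) : V →ₗ[F] V))
    (W' : Submodule F V) (hW' : ∀ h ∈ H, ∀ v ∈ W', ρ h v ∈ W')
    (e : ↥W ≃ₗ[F] ↥W')
    (he : ∀ (h : G) (hh : h ∈ H) (w : ↥W),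
      (e ⟨ρ h (w : V), hW h hh (w : V) w.2⟩ : V) = ρ h ((e w : V))) :
    (⨆ i, W'.map (ρ (T i) : V →ₗ[F] V)) = ⊤ ∧
    iSupIndep fun i => W'.map (ρ (T i) : V →ₗ[F] V) := by
  classical
  set L := ⨆ i, W'.map (ρ (T i) : V →ₗ[F] V) with hLdef
  -- L is G-invariant
  have hmemL : ∀ i : Fin n, ∀ w' ∈ W', ρ (T i) w' ∈ L := fun i w' hw' =>
    le_iSup (fun i => W'.map (ρ (T i) : V →ₗ[F] V)) i ⟨w', hw', rfl⟩
  have hinv : ∀ g : G, ∀ v ∈ L, ρ g v ∈ L := by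
    intro g v hv
    refine Submodule.iSup_induction _ (motive := fun v => ρ g v ∈ L) hv ?_ (by simp) ?_
    · rintro i x ⟨w', hw', rfl⟩
      obtain ⟨j, hj, -⟩ := hT (g * T i)
      have hgj : g * T i = T j * ((T j)⁻¹ * (g * T i)) := by group
      have h1 : ρ (g * T i) w' ∈ L := by
        rw [hgj, hcoc]
        exact L.smul_mem _ (hmemL j _ (hW' _ hj w' hw'))
      have h2 : ((α g (T i))⁻¹ : Fˣ) • ρ (g * T i) w' = ρ g (ρ (T i) w') := by
        rw [hcoc g (T i) w']
        simp [Units.smul_def, smul_smul]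
      show ρ g (ρ (T i) w') ∈ L
      rw [← h2]
      exact L.smul_mem _ h1
    · intro x y hx hy
      simpa [map_add] using L.add_mem hx hy
  rcases hirr L hinv with hbot | htop
  · -- degenerate case: W' = ⊥, hence W = ⊥, hence V is trivial
    obtain ⟨i0, -, -⟩ := hT 1
    have hW'i : W'.map (ρ (T i0) : V →ₗ[F] V) = ⊥ :=
      le_bot_iff.mp (hbot ▸ le_iSup (fun i => W'.map (ρ (T i) : V →ₗ[F] V)) i0)
    have hW'bot : W' = ⊥ := by
      rw [Submodule.eq_bot_iff]
      intro x hx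
      have : ρ (T i0) x ∈ (⊥ : Submodule F V) := hW'i ▸ ⟨x, hx, rfl⟩
      have h0 : ρ (T i0) x = ρ (T i0) 0 := by simpa using this
      exact (ρ (T i0)).injective h0
    have hWbot : W = ⊥ := by
      rw [Submodule.eq_bot_iff]
      intro x hx
      have hz : (e ⟨x, hx⟩ : V) = 0 :=
        (Submodule.eq_bot_iff W').mp hW'bot _ (e ⟨x, hx⟩).2
      have h0 : e ⟨x, hx⟩ = e 0 := by
        ext
        simpa using hz
      simpa [Subtype.ext_iff] using e.injective h0
    have hVtriv : (⊤ : Submodule F V) = ⊥ := by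
      rw [← hsup]
      simp [hWbot]
    have hall : ∀ p : Submodule F V, p = ⊥ := fun p => le_bot_iff.mp (hVtriv ▸ le_top)
    constructor
    · rw [hall (⊤ : Submodule F V)]
      exact hall _
    · intro i
      simp only [hall]
      exact disjoint_bot_left
  · -- main case
    set M : Fin n → Submodule F V := fun i => W.map (ρ (T i) : V →ₗ[F] V) with hMdef
    have hInternal : DirectSum.IsInternal M :=
      (DirectSum.isInternal_submodule_iff_iSupIndep_and_iSup_eq_top M).mpr ⟨hindep, hsup⟩
    set ε : ∀ i : Fin n, W ≃ₗ[F] M i := fun i =>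
      Submodule.equivMapOfInjective ((ρ (T i) : V →ₗ[F] V)) (ρ (T i)).injective W with hεdef
    set ψ : ∀ i : Fin n, M i →ₗ[F] V := fun i =>
      (ρ (T i) : V →ₗ[F] V) ∘ₗ W'.subtype ∘ₗ (e : W →ₗ[F] W') ∘ₗ ((ε i).symm : M i →ₗ[F] W)
      with hψdef
    set E : (DirectSum (Fin n) fun i => M i) ≃ₗ[F] V :=
      LinearEquiv.ofBijective (DirectSum.coeLinearMap M) hInternal with hEdef
    set φ : V →ₗ[F] V := (DirectSum.toModule F (Fin n) V ψ) ∘ₗ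
      (E.symm : V →ₗ[F] DirectSum (Fin n) fun i => M i) with hφdef
    have key : ∀ (i : Fin n) (w : W), φ (ρ (T i) w) = ρ (T i) (e w) := by
      intro i w
      have hmem : ρ (T i) (w : V) ∈ M i := ⟨w, w.2, rfl⟩
      have hsymm : E.symm (ρ (T i) (w : V)) =
          DirectSum.lof F (Fin n) (fun i => M i) i ⟨_, hmem⟩ := by
        rw [LinearEquiv.symm_apply_eq, hEdef]
        rw [DirectSum.lof_eq_of]
        exact (DirectSum.coeLinearMap_of M i ⟨_, hmem⟩).symm
      rw [hφdef, LinearMap.comp_apply, LinearEquiv.coe_coe, hsymm, DirectSum.toModule_lof]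
      have hε : (ε i).symm ⟨_, hmem⟩ = w := by
        rw [LinearEquiv.symm_apply_eq]
        ext
        rw [hεdef]
        exact (Submodule.coe_equivMapOfInjective_apply
          ((ρ (T i) : V →ₗ[F] V)) (ρ (T i)).injective W w).symm
      simp [hψdef, hε]
    have mapeq : ∀ i : Fin n, (M i).map φ = W'.map (ρ (T i) : V →ₗ[F] V) := by
      intro i
      apply le_antisymm
      · rintro x ⟨y, ⟨w, hw, rfl⟩, rfl⟩
        exact ⟨e ⟨w, hw⟩, (e ⟨w, hw⟩).2, (key i ⟨w, hw⟩).symm⟩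
      · rintro x ⟨w', hw', rfl⟩
        refine ⟨ρ (T i) (e.symm ⟨w', hw'⟩ : V), ⟨_, (e.symm ⟨w', hw'⟩).2, rfl⟩, ?_⟩
        rw [key i (e.symm ⟨w', hw'⟩)]
        simp
    have hsurj : Function.Surjective φ := by
      rw [← LinearMap.range_eq_top]
      apply top_le_iff.mp
      rw [← htop, hLdef]
      refine iSup_le fun i => ?_
      rw [← mapeq i]
      exact LinearMap.map_le_range
    have hinj : Function.Injective φ :=
      (LinearMap.injective_iff_surjective (f := φ)).mpr hsurj
    set Φ : V ≃ₗ[F] V := LinearEquiv.ofBijective φ ⟨hinj, hsurj⟩ with hΦdef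
    have hindep' : iSupIndep fun i => W'.map (ρ (T i) : V →ₗ[F] V) := by
      have := hindep.map_orderIso (Submodule.orderIsoMapComap Φ)
      convert this using 1
      funext i
      rw [← mapeq i]
      rfl
    exact ⟨htop, hindep'⟩
end

section
/- Let V be an absolutely irreducible projective F-representation of G, and suppose V ≅ Ind_H^G(W) for a finite-index subgroup H and irreducible F^αH-module W. Then Res_H^G(V) contains a unique subrepresentation isomorphic to W, and W is itself absolutely irreducible. -/
set_option synthInstance.maxHeartbeats 1000000
set_option maxHeartbeats 1000000

/-- Let `V` be an absolutely irreducible projective `F`-representation of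
`G` (irreducible with scalar commutant `End_{F^αG}(V) = F`), and suppose `V = Ind_H^G(W)`
for a finite-index subgroup `H` and an irreducible `F^αH`-submodule `W` (internally, `V` is
the direct sum of the translates `ρ(gᵢ)W`).  Then `Res_H^G(V)` contains a unique
`H`-subrepresentation isomorphic to `W` (namely `W` itself), and `W` is absolutely
irreducible, i.e. every `H`-equivariant endomorphism of `W` is a scalar. -/
theorem induced_absolutely_irreducible_unique_copy
    {F : Type*} [Field F] {V : Type*} [AddCommGroup V] [Module F V]
    [FiniteDimensional F V]
    {G : Type*} [Group G] (H : Subgroup G)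
    (ρ : G → V ≃ₗ[F] V) (α : G → G → Fˣ)
    (hρ1 : ρ 1 = LinearEquiv.refl F V)
    (hcoc : ∀ x y : G, ∀ v : V, ρ (x * y) v = (α x y : F) • ρ x (ρ y v))
    (hirr : ∀ L : Submodule F V, (∀ g : G, ∀ v ∈ L, ρ g v ∈ L) → L = ⊥ ∨ L = ⊤)
    (hEnd : ∀ f : Module.End F V, (∀ g : G,
        f * (ρ g : V →ₗ[F] V) = (ρ g : V →ₗ[F] V) * f) →
      ∃ c : F, f = c • (1 : Module.End F V))
    {n : ℕ} (T : Fin n → G) (hT : ∀ g : G, ∃! i : Fin n, (T i)⁻¹ * g ∈ H)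
    (W : Submodule F V) (hW : ∀ h ∈ H, ∀ v ∈ W, ρ h v ∈ W)
    (hWirr : ∀ L : Submodule F V, L ≤ W → (∀ h ∈ H, ∀ v ∈ L, ρ h v ∈ L) →
      L = ⊥ ∨ L = W)
    (hsup : (⨆ i, W.map (ρ (T i) : V →ₗ[F] V)) = ⊤)
    (hindep : iSupIndep fun i => W.map (ρ (T i) : V →ₗ[F] V)) :
    (∀ W' : Submodule F V, (∀ h ∈ H, ∀ v ∈ W', ρ h v ∈ W') →
      (∃ e : ↥W ≃ₗ[F] ↥W', ∀ (h : G) (hh : h ∈ H) (w : ↥W),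
        (e ⟨ρ h (w : V), hW h hh (w : V) w.2⟩ : V) = ρ h ((e w : V))) →
      W' = W) ∧
    (∀ f : ↥W →ₗ[F] ↥W, (∀ (h : G) (hh : h ∈ H) (w : ↥W),
        ((f ⟨ρ h (w : V), hW h hh (w : V) w.2⟩ : ↥W) : V) = ρ h ((f w : V))) →
      ∃ c : F, f = c • LinearMap.id) := by
  classical
  set S : Fin n → Submodule F V := fun i => W.map (ρ (T i) : V →ₗ[F] V) with hS
  have hInternal : DirectSum.IsInternal S :=
    DirectSum.isInternal_submodule_of_iSupIndep_of_iSup_eq_top hindep hsup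
  -- inverse (up to the cocycle scalar) of ρ g
  have hinv : ∀ (g : G) (v : V), ((α g⁻¹ g : F) • ρ g⁻¹ (ρ g v)) = v := by
    intro g v
    have := hcoc g⁻¹ g v
    rw [inv_mul_cancel, hρ1] at this
    simpa using this.symm
  -- τ i is a left inverse of ρ (T i)
  set τ : Fin n → (V →ₗ[F] V) :=
    fun i => (α (T i)⁻¹ (T i) : F) • ((ρ (T i)⁻¹ : V ≃ₗ[F] V) : V →ₗ[F] V) with hτdef
  have hτ : ∀ (i : Fin n) (w : V), τ i (ρ (T i) w) = w := by
    intro i w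
    simpa [hτdef] using hinv (T i) w
  have hτW : ∀ i : Fin n, ∀ x ∈ S i, τ i x ∈ W := by
    rintro i x ⟨w, hw, rfl⟩
    simp only [LinearEquiv.coe_coe]
    rw [hτ i w]; exact hw
  -- Key lemma: every H-equivariant map W →ₗ V is a scalar multiple of the inclusion.
  have key : ∀ ψ : ↥W →ₗ[F] V,
      (∀ (h : G) (hh : h ∈ H) (w : ↥W),
        ψ ⟨ρ h (w : V), hW h hh (w : V) w.2⟩ = ρ h (ψ w)) →
      ∃ c : F, ∀ w : ↥W, ψ w = c • (w : V) := by
    intro ψ hψ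
    -- build the component maps and the global endomorphism Φ
    set Ψ : ∀ i : Fin n, ↥(S i) →ₗ[F] V :=
      fun i => ((ρ (T i) : V ≃ₗ[F] V) : V →ₗ[F] V) ∘ₗ ψ ∘ₗ
        ((τ i).restrict (hτW i)) with hΨdef
    set E : (DirectSum (Fin n) fun i => ↥(S i)) ≃ₗ[F] V :=
      LinearEquiv.ofBijective (DirectSum.coeLinearMap S) hInternal with hEdef
    set Φ : V →ₗ[F] V :=
      (DirectSum.toModule F (Fin n) V Ψ) ∘ₗ E.symm.toLinearMap with hΦdef
    have hΦ : ∀ (i : Fin n) (w : V) (hw : w ∈ W),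
        Φ (ρ (T i) w) = ρ (T i) (ψ ⟨w, hw⟩) := by
      intro i w hw
      have hx : ρ (T i) w ∈ S i := ⟨w, hw, rfl⟩
      have hEsymm : E.symm (ρ (T i) w)
          = DirectSum.lof F (Fin n) (fun i => ↥(S i)) i ⟨ρ (T i) w, hx⟩ := by
        apply E.injective
        rw [LinearEquiv.apply_symm_apply]
        simp [hEdef, DirectSum.lof_eq_of, DirectSum.coeLinearMap_of]
        change _ = DirectSum.coeLinearMap S _
        rw [DirectSum.coeLinearMap_of]
      rw [hΦdef, LinearMap.comp_apply, LinearEquiv.coe_toLinearMap, hEsymm,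
        DirectSum.toModule_lof]
      have : ((τ i).restrict (hτW i)) ⟨ρ (T i) w, hx⟩ = ⟨w, hw⟩ := by
        apply Subtype.ext
        simpa using hτ i w
      simp [hΨdef, this]
    -- Φ commutes with every ρ g
    have hcomm : ∀ g : G, Φ ∘ₗ ((ρ g : V ≃ₗ[F] V) : V →ₗ[F] V)
        = ((ρ g : V ≃ₗ[F] V) : V →ₗ[F] V) ∘ₗ Φ := by
      intro g
      have hker : ∀ i : Fin n, S i ≤ LinearMap.ker
          (Φ ∘ₗ ((ρ g : V ≃ₗ[F] V) : V →ₗ[F] V)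
            - ((ρ g : V ≃ₗ[F] V) : V →ₗ[F] V) ∘ₗ Φ) := by
        rintro i x ⟨w, hw, rfl⟩
        obtain ⟨j, hj, -⟩ := hT (g * T i)
        set h : G := (T j)⁻¹ * (g * T i) with hh
        have hgT : g * T i = T j * h := by
          rw [hh]; group
        have step1 : ρ g (ρ (T i) w) = ((α g (T i) : F)⁻¹ * (α (T j) h : F)) •
            ρ (T j) (ρ h w) := by
          have h1 := hcoc g (T i) w
          have h2 := hcoc (T j) h w
          rw [← hgT] at h2
          rw [h2] at h1
          have := congrArg (fun v => (α g (T i) : F)⁻¹ • v) h1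
          simp only [smul_smul] at this ⊢
          rw [inv_mul_cancel₀ (Units.ne_zero (α g (T i)))] at this
          rw [one_smul] at this
          exact this.symm
        have step1' : ρ g (ρ (T i) (ψ ⟨w, hw⟩)) =
            ((α g (T i) : F)⁻¹ * (α (T j) h : F)) • ρ (T j) (ρ h (ψ ⟨w, hw⟩)) := by
          have h1 := hcoc g (T i) (ψ ⟨w, hw⟩)
          have h2 := hcoc (T j) h (ψ ⟨w, hw⟩)
          rw [← hgT] at h2
          rw [h2] at h1
          have := congrArg (fun v => (α g (T i) : F)⁻¹ • v) h1
          simp only [smul_smul] at this ⊢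
          rw [inv_mul_cancel₀ (Units.ne_zero (α g (T i)))] at this
          rw [one_smul] at this
          exact this.symm
        have hρhw : ρ h w ∈ W := hW h hj w hw
        have hΦρ : Φ (ρ g (ρ (T i) w)) = ρ g (ρ (T i) (ψ ⟨w, hw⟩)) := by
          rw [step1, map_smul, hΦ j (ρ h w) hρhw, step1']
          congr 1
          have := hψ h hj ⟨w, hw⟩
          simp only at this
          rw [← this]
        simp only [LinearMap.mem_ker, LinearMap.sub_apply, LinearMap.comp_apply,
          LinearEquiv.coe_coe]
        rw [hΦρ, hΦ i w hw, sub_self]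
      have : (⊤ : Submodule F V) ≤ LinearMap.ker
          (Φ ∘ₗ ((ρ g : V ≃ₗ[F] V) : V →ₗ[F] V)
            - ((ρ g : V ≃ₗ[F] V) : V →ₗ[F] V) ∘ₗ Φ) := by
        rw [← hsup]
        exact iSup_le hker
      ext v
      have hv := this (Submodule.mem_top (x := v))
      simp only [LinearMap.mem_ker, LinearMap.sub_apply] at hv
      have := sub_eq_zero.mp hv
      simpa using this
    obtain ⟨c, hc⟩ := hEnd Φ (fun g => hcomm g)
    refine ⟨c, fun w => ?_⟩
    -- find the coset representative lying in H
    obtain ⟨i₀, hi₀, -⟩ := hT 1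
    rw [mul_one] at hi₀
    have hTi₀ : T i₀ ∈ H := by
      have := H.inv_mem hi₀; simpa using this
    -- evaluate Φ at ρ (T i₀) w
    have h1 : Φ (ρ (T i₀) (w : V)) = ρ (T i₀) (ψ w) := by
      have := hΦ i₀ (w : V) w.2
      simpa using this
    have h2 : Φ (ρ (T i₀) (w : V)) = c • ρ (T i₀) (w : V) := by
      rw [hc]; simp
    have h3 : ρ (T i₀) (ψ w) = ρ (T i₀) (c • (w : V)) := by
      rw [← h1, h2, map_smul]
    exact (ρ (T i₀)).injective h3
  constructor
  · rintro W' hW' ⟨e, he⟩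
    set ψ : ↥W →ₗ[F] V := W'.subtype ∘ₗ (e : ↥W →ₗ[F] ↥W') with hψdef
    obtain ⟨c, hc⟩ := key ψ (by
      intro h hh w
      simpa [hψdef] using he h hh w)
    by_cases hc0 : c = 0
    · -- then W' = ⊥ and W = ⊥
      have hWbot : W = ⊥ := by
        rw [Submodule.eq_bot_iff]
        intro x hx
        have := hc ⟨x, hx⟩
        rw [hc0, zero_smul] at this
        have : e ⟨x, hx⟩ = 0 := by
          apply Subtype.ext
          simpa [hψdef] using this
        have h0 : (⟨x, hx⟩ : ↥W) = 0 := e.injective (by simp [this])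
        simpa using congrArg Subtype.val h0
      have hW'bot : W' = ⊥ := by
        rw [Submodule.eq_bot_iff]
        intro x hx
        obtain ⟨w, hw⟩ := e.surjective ⟨x, hx⟩
        have hw0 : w = 0 := by
          have : (w : V) ∈ (⊥ : Submodule F V) := hWbot ▸ w.2
          exact Subtype.ext (by simpa using this)
        rw [hw0, map_zero] at hw
        simpa using congrArg Subtype.val hw.symm
      rw [hW'bot, hWbot]
    · -- c ≠ 0 : W' = c • W = W
      apply le_antisymm
      · intro x hx
        obtain ⟨w, hw⟩ := e.surjective ⟨x, hx⟩
        have : x = c • (w : V) := by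
          have := hc w
          simp only [hψdef, LinearMap.comp_apply, LinearEquiv.coe_coe,
            Submodule.coe_subtype] at this
          rw [hw] at this
          exact this
        rw [this]
        exact W.smul_mem c w.2
      · intro x hx
        have : ψ (c⁻¹ • ⟨x, hx⟩) = x := by
          rw [hc, SetLike.val_smul, smul_smul, mul_inv_cancel₀ hc0, one_smul]
        rw [← this]
        simp only [hψdef, LinearMap.comp_apply, LinearEquiv.coe_coe,
          Submodule.coe_subtype]
        exact (e (c⁻¹ • ⟨x, hx⟩)).2
  · intro f hf
    set ψ : ↥W →ₗ[F] V := W.subtype ∘ₗ f with hψdef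
    obtain ⟨c, hc⟩ := key ψ (by
      intro h hh w
      simpa [hψdef] using hf h hh w)
    refine ⟨c, ?_⟩
    ext w
    have := hc w
    simp only [hψdef, LinearMap.comp_apply, Submodule.coe_subtype] at this
    simp [this]
end

section
/- Every noncommutative central division algebra D over a field F contains infinitely many distinct subfields. -/
/-- Every noncommutative (finite-dimensional) central division algebra
`D` over a field `F` contains infinitely many distinct subfields (commutative division
subalgebras). -/
theorem infinitely_many_subfields_of_noncommutative_central_division_algebra
    {F : Type*} [Field F] {D : Type*} [DivisionRing D] [Algebra F D]
    [FiniteDimensional F D]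
    (hcentral : ∀ z : D, z ∈ Subring.center D ↔ ∃ c : F, algebraMap F D c = z)
    (hnoncomm : ∃ u v : D, u * v ≠ v * u) :
    {K : Subalgebra F D | IsField ↥K}.Infinite := by
  classical
  obtain ⟨u, v, huv⟩ := hnoncomm
  -- `F` is infinite, else `D` would be a finite division ring, hence commutative.
  have hFinf : Infinite F := by
    by_contra h
    rw [not_infinite_iff_finite] at h
    have : Finite D := Module.finite_of_finite F
    letI : Field D := littleWedderburn D
    exact huv (mul_comm u v)
  -- Every `F[x]` is a field.
  have key : ∀ x : D, IsField (Algebra.adjoin F {x}) := by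
    intro x
    refine ⟨⟨0, 1, fun h => zero_ne_one (congrArg Subtype.val h)⟩, ?_, ?_⟩
    · rintro ⟨a, ha⟩ ⟨b, hb⟩
      have hcab : Commute a b := by
        refine Algebra.commute_of_mem_adjoin_of_forall_mem_commute hb ?_
        rintro c hc
        rw [Set.mem_singleton_iff] at hc
        subst hc
        exact (Algebra.commute_of_mem_adjoin_self ha).symm
      exact Subtype.ext hcab
    · rintro ⟨a, ha⟩ h0
      have ha0 : a ≠ 0 := fun h => h0 (Subtype.ext h)
      have hint : IsIntegral F a := Algebra.IsIntegral.isIntegral a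
      refine ⟨⟨a⁻¹, hint.inv_mem ha⟩, Subtype.ext ?_⟩
      exact mul_inv_cancel₀ ha0
  set f : F → Subalgebra F D := fun a => Algebra.adjoin F {u + a • v} with hf
  refine Set.infinite_of_injective_forall_mem (f := f) ?_ ?_
  · intro a b hab
    by_contra hne
    have h1 : u + a • v ∈ f a := Algebra.self_mem_adjoin_singleton F _
    have h2 : u + b • v ∈ f a := hab ▸ Algebra.self_mem_adjoin_singleton F _
    have h3 : (a - b) • v ∈ f a := by
      have := sub_mem h1 h2
      rwa [add_sub_add_left_eq_sub, ← sub_smul] at this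
    have h4 : v ∈ f a := by
      have := (f a).smul_mem h3 (a - b)⁻¹
      rwa [smul_smul, inv_mul_cancel₀ (sub_ne_zero.mpr hne), one_smul] at this
    have h5 : Commute (u + a • v) v := Algebra.commute_of_mem_adjoin_self h4
    apply huv
    have := h5.eq
    rw [add_mul, mul_add, smul_mul_assoc, mul_smul_comm] at this
    exact add_right_cancel this
  · intro a
    exact key (u + a • v)
end

section
/- For t ≥ 2 and F algebraically closed, the matrix algebra M_t(F) has no nonunital subalgebras of codimension one (i.e., no F-subspaces of dimension t²−1 that are closed under multiplication but do not contain the identity). -/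
/-- For `t ≥ 2` and `F` algebraically closed, the matrix algebra
`M_t(F)` has no nonunital subalgebras of codimension one: every `F`-subspace of dimension
`t² - 1` that is closed under multiplication contains the identity matrix. -/
theorem no_nonunital_codimension_one_subalgebra_of_matrix
    {F : Type*} [Field F] [IsAlgClosed F] {t : ℕ} (ht : 2 ≤ t)
    (S : Submodule F (Matrix (Fin t) (Fin t) F))
    (hmul : ∀ x ∈ S, ∀ y ∈ S, x * y ∈ S)
    (hcodim : Module.finrank F S = t ^ 2 - 1) :
    (1 : Matrix (Fin t) (Fin t) F) ∈ S := by
  by_contra h1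
  -- get a functional vanishing on S, nonzero on 1
  obtain ⟨f, hf1, hfS⟩ := S.exists_dual_map_eq_bot_of_notMem h1 inferInstance
  have hfS' : S ≤ LinearMap.ker f := by
    intro x hx
    have : f x ∈ S.map f := ⟨x, hx, rfl⟩
    rw [hfS] at this
    simpa using this
  have hfne : f ≠ 0 := by
    intro h; exact hf1 (by simp [h])
  have hdim : Module.finrank F (Matrix (Fin t) (Fin t) F) = t ^ 2 := by
    rw [Module.finrank_matrix]
    simp [sq]
  -- S = ker f
  have hSker : S = LinearMap.ker f := by
    apply Submodule.eq_of_le_of_finrank_eq hfS'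
    rw [hcodim]
    have := Module.Dual.finrank_ker_add_one_of_ne_zero hfne
    omega
  set c := f 1 with hc
  -- key identity: c * f (x * y) = f x * f y
  have key : ∀ x y : Matrix (Fin t) (Fin t) F, c * f (x * y) = f x * f y := by
    intro x y
    have hx0 : (c • x - f x • 1) ∈ S := by
      rw [hSker, LinearMap.mem_ker]
      simp [mul_comm, ← hc]
    have hy0 : (c • y - f y • 1) ∈ S := by
      rw [hSker, LinearMap.mem_ker]
      simp [mul_comm, ← hc]
    have hprod := hmul _ hx0 _ hy0
    rw [hSker, LinearMap.mem_ker] at hprod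
    have hexp : (c • x - f x • 1) * (c • y - f y • 1)
        = (c * c) • (x * y) - (c * f y) • x - (c * f x) • y + (f x * f y) • 1 := by
      simp only [sub_mul, mul_sub, smul_mul_assoc, Matrix.mul_smul, one_mul, mul_one,
        smul_smul]
      module
    rw [hexp] at hprod
    simp only [map_add, map_sub, map_smul, smul_eq_mul, ← hc] at hprod
    have : c * (c * f (x * y)) = c * (f x * f y) := by linear_combination hprod
    exact mul_left_cancel₀ hf1 this
  -- now derive f 1 = 0, contradiction
  have hnt : Nontrivial (Fin t) := Fin.nontrivial_iff_two_le.mpr ht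
  have hEzero : ∀ i : Fin t, f (Matrix.single i i 1) = 0 := by
    intro i
    obtain ⟨k, hk⟩ := exists_ne i
    have h2 := key (Matrix.single i k 1) (Matrix.single i k 1)
    rw [Matrix.single_mul_single_of_ne (c := (1:F)) (i := i) (j := k) (k := i) (h := hk) (d := 1)] at h2
    simp only [map_zero, mul_zero] at h2
    have hik : f (Matrix.single i k 1) = 0 := mul_self_eq_zero.mp h2.symm
    have h3 := key (Matrix.single i k 1) (Matrix.single k i 1)
    rw [Matrix.single_mul_single_same (c := (1:F)) (i := i) (j := k) (k := i) (d := 1), hik, zero_mul, one_mul] at h3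
    rcases mul_eq_zero.mp h3 with h | h
    · exact absurd h hf1
    · exact h
  have hone : (1 : Matrix (Fin t) (Fin t) F) = ∑ i : Fin t, Matrix.single i i 1 := by
    ext a b
    rw [Matrix.sum_apply]
    simp only [Matrix.single, Matrix.of_apply, Matrix.one_apply]
    rcases eq_or_ne a b with h | h
    · subst h
      simp
    · rw [if_neg h]
      symm
      apply Finset.sum_eq_zero
      intro x _
      rw [if_neg]
      rintro ⟨rfl, rfl⟩
      exact h rfl
  apply hf1
  rw [hc, hone, map_sum]
  simp [hEzero]
end
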